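/- Define the form h on L₂(ℝ) by D(h) = L₂(−∞,0) ⊕ W^{1,2}(0,∞) and h(φ) = ∫₀^∞ |φ′|², and let Ω = (0,∞). Then the relative capacity of {0} with respect to Ω satisfies cap_Ω({0}) ≥ (4π)^{−1}; in particular cap_Ω({0}) ≠ 0. -/

import Mathlib

/-!
If `h(φ) = ∫₀^∞ |φ′|² < 1/4`, then, from the pointwise bound `|φ′| ≤ |φ′|² + 1/4`,
`φ` drops by less than `1/2` over any subinterval of `(0, 1]`. Since `φ ≥ 1` at points
arbitrarily close to `0`, this forces `φ ≥ 1/2` on `(0, 1]`, hence `‖φ‖₂² ≥ 1/4`.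
Either way `‖φ‖²_{D(h)} ≥ 1/4 ≥ (4π)⁻¹`.
-/

open MeasureTheory Filter Topology Set
open scoped ENNReal

namespace DirichletPaper

/-- The capacity of `{0}` relative to `Ω = (0,∞)` with respect to the Dirichlet form `h`
on `L₂(ℝ)` with `D(h) = L₂(-∞,0) ⊕ W^{1,2}(0,∞)` and `h(φ) = ∫₀^∞ |φ′|²`.  An element
`φ` of `D(h)` is encoded as a function of `L₂(ℝ)` which is locally absolutely continuous
on `(0,∞)` with derivative `g ∈ L₂(0,∞)` there, and `‖φ‖²_{D(h)} = ‖φ‖₂² + ∫₀^∞ g²`.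
The capacity is the infimum of `‖φ‖²_{D(h)}` over all `φ ∈ D(h)` for which there is an
open set `V ∋ 0` with `φ ≥ 1` a.e. on `V ∩ Ω`. -/
noncomputable def capHalfLineAtZero : ℝ≥0∞ :=
  sInf {r : ℝ≥0∞ | ∃ φ g : ℝ → ℝ, MemLp φ 2 volume ∧
    IntegrableOn (fun x => g x ^ 2) (Set.Ioi 0) volume ∧
    (∀ a b : ℝ, 0 < a → a ≤ b → φ b = φ a + ∫ x in a..b, g x) ∧
    (∃ V : Set ℝ, IsOpen V ∧ (0 : ℝ) ∈ V ∧ ∀ᵐ x ∂volume, x ∈ V ∩ Set.Ioi 0 → 1 ≤ φ x) ∧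
    r = ENNReal.ofReal ((∫ x, φ x ^ 2) + ∫ x in Set.Ioi 0, g x ^ 2)}

lemma abs_le_sq_add_quarter (y : ℝ) : |y| ≤ y ^ 2 + 1 / 4 := by
  nlinarith [sq_nonneg (|y| - 1 / 2), sq_abs y]

lemma abs_intervalIntegral_le_integral_sq_add {g : ℝ → ℝ} {a b : ℝ} (hab : a ≤ b)
    (hg : IntegrableOn (fun x => g x ^ 2) (Ioc a b)) :
    |∫ x in a..b, g x| ≤ (∫ x in Ioc a b, g x ^ 2) + (b - a) / 4 := by
  have hconst : IntegrableOn (fun _ => (1 / 4 : ℝ)) (Ioc a b) := by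
    simp [integrableOn_const_iff]
  calc |∫ x in a..b, g x| ≤ ∫ x in Ioc a b, |g x| := by
        rw [← intervalIntegral.integral_of_le hab]
        exact intervalIntegral.abs_integral_le_integral_abs hab
    _ ≤ ∫ x in Ioc a b, (g x ^ 2 + 1 / 4) :=
        integral_mono_of_nonneg (ae_of_all _ fun x => abs_nonneg (g x)) (Integrable.add hg hconst)
          (ae_of_all _ fun x => abs_le_sq_add_quarter (g x))
    _ = (∫ x in Ioc a b, g x ^ 2) + (b - a) / 4 := by
        rw [integral_add hg hconst, setIntegral_const, Real.volume_real_Ioc_of_le hab,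
          smul_eq_mul]
        ring

lemma frequently_nhdsGT_of_ae_mem_inter {c : ℝ} {V : Set ℝ} (hV : V ∈ 𝓝 c) {p : ℝ → Prop}
    (hp : ∀ᵐ x, x ∈ V ∩ Ioi c → p x) : ∃ᶠ x in 𝓝[>] c, p x := by
  refine frequently_iff.mpr fun {U} hU => ?_
  obtain ⟨d, hcd, hsub⟩ :=
    mem_nhdsGT_iff_exists_Ioo_subset.mp (inter_mem hU (nhdsWithin_le_nhds hV))
  have hpos : volume (Ioo c d) ≠ 0 := by
    simpa [Real.volume_Ioo] using hcd
  obtain ⟨x, hx, hpx⟩ := Measure.exists_mem_of_measure_ne_zero_of_ae hpos (ae_restrict_of_ae hp)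
  exact ⟨x, (hsub hx).1, hpx ⟨(hsub hx).2, hx.1⟩⟩

section Admissible

variable {φ g : ℝ → ℝ} {V : Set ℝ}

lemma one_sub_le_of_ae_one_le (hg : IntegrableOn (fun x => g x ^ 2) (Ioi 0))
    (hφ : ∀ a b : ℝ, 0 < a → a ≤ b → φ b = φ a + ∫ x in a..b, g x)
    (hV : V ∈ 𝓝 0) (hφV : ∀ᵐ x, x ∈ V ∩ Ioi 0 → 1 ≤ φ x) {x : ℝ} (hx : 0 < x) :
    1 - ((∫ t in Ioi 0, g t ^ 2) + x / 4) ≤ φ x := by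
  obtain ⟨a, hφa, ha⟩ :=
    ((frequently_nhdsGT_of_ae_mem_inter hV hφV).and_eventually (Ioo_mem_nhdsGT hx)).exists
  have hsub : Ioc a x ⊆ Ioi 0 := fun t ht => ha.1.trans ht.1
  have hdrop := abs_intervalIntegral_le_integral_sq_add ha.2.le (hg.mono_set hsub)
  have hmono : ∫ t in Ioc a x, g t ^ 2 ≤ ∫ t in Ioi 0, g t ^ 2 :=
    setIntegral_mono_set hg (ae_of_all _ fun t => sq_nonneg (g t)) hsub.eventuallyLE
  rw [hφ a x ha.1 ha.2.le]
  linarith [neg_abs_le (∫ t in a..x, g t), ha.1]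

lemma quarter_le_energy (hφ2 : MemLp φ 2 volume)
    (hg : IntegrableOn (fun x => g x ^ 2) (Ioi 0))
    (hφ : ∀ a b : ℝ, 0 < a → a ≤ b → φ b = φ a + ∫ x in a..b, g x)
    (hV : V ∈ 𝓝 0) (hφV : ∀ᵐ x, x ∈ V ∩ Ioi 0 → 1 ≤ φ x) :
    1 / 4 ≤ (∫ x, φ x ^ 2) + ∫ x in Ioi 0, g x ^ 2 := by
  have hG_nonneg : 0 ≤ ∫ x in Ioi 0, g x ^ 2 :=
    setIntegral_nonneg measurableSet_Ioi fun x _ => sq_nonneg (g x)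
  rcases le_or_gt (1 / 4) (∫ x in Ioi 0, g x ^ 2) with hG | hG
  · have hφ_nonneg : 0 ≤ ∫ x, φ x ^ 2 := integral_nonneg fun x => sq_nonneg _
    linarith
  have hφ_sq_ge : ∀ x ∈ Ioc (0 : ℝ) 1, 1 / 4 ≤ φ x ^ 2 := fun x hx => by
    have := one_sub_le_of_ae_one_le hg hφ hV hφV hx.1
    nlinarith [hx.2]
  have hφsq : Integrable (fun x => φ x ^ 2) := hφ2.integrable_sq
  calc (1 / 4 : ℝ) = ∫ _ in Ioc (0 : ℝ) 1, (1 / 4 : ℝ) := by simp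
    _ ≤ ∫ x in Ioc 0 1, φ x ^ 2 :=
      setIntegral_mono_on (by simp [integrableOn_const_iff]) hφsq.integrableOn
        measurableSet_Ioc hφ_sq_ge
    _ ≤ ∫ x, φ x ^ 2 := setIntegral_le_integral hφsq (.of_forall fun x => sq_nonneg _)
    _ ≤ _ := le_add_of_nonneg_right hG_nonneg

end Admissible

lemma inv_four_mul_pi_le_quarter : (4 * Real.pi)⁻¹ ≤ 1 / 4 := by
  rw [one_div]
  gcongr
  linarith [Real.pi_gt_three]

/-- For the form `h` on `L₂(ℝ)` with `D(h) = L₂(-∞,0) ⊕ W^{1,2}(0,∞)`,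
`h(φ) = ∫₀^∞ |φ′|²` and `Ω = (0,∞)`, one has `cap_Ω({0}) ≥ (4π)⁻¹`; in particular
`cap_Ω({0}) ≠ 0`. -/
theorem statement16 :
    ENNReal.ofReal ((4 * Real.pi)⁻¹) ≤ capHalfLineAtZero ∧ capHalfLineAtZero ≠ 0 := by
  have hle : ENNReal.ofReal ((4 * Real.pi)⁻¹) ≤ capHalfLineAtZero := by
    refine le_sInf ?_
    rintro r ⟨φ, g, hφ2, hg, hφ, ⟨V, hVo, hV0, hφV⟩, rfl⟩
    exact ENNReal.ofReal_le_ofReal <| inv_four_mul_pi_le_quarter.trans <|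
      quarter_le_energy hφ2 hg hφ (hVo.mem_nhds hV0) hφV
  have hpos : 0 < ENNReal.ofReal ((4 * Real.pi)⁻¹) :=
    ENNReal.ofReal_pos.mpr (by positivity)
  exact ⟨hle, (hpos.trans_le hle).ne'⟩

end DirichletPaper
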